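/- Let (Z, ν) be a measure space, x₀ ∈ ℝ^{k₀} fixed, and for each z ∈ Z define x_i(θ, z) = h_i(x_{i−1}(θ, z), θ, z) recursively, where h_i : ℝ^{k_{i−1}} × ℝ^m × Z → ℝ^{k_i}. Let f : ℝ^{k₁} × ⋯ × ℝ^{k_n} → ℝ, θ₀ ∈ ℝ^m, ε > 0, and set F(θ, z) = f(x₁(θ, z),…,x_n(θ, z)). Assume: (i) for ν-a.e. z, F(·, z) is differentiable at θ₀; (ii) for ν-a.e. z there exist measurable constants N_i(z), K_i(z), M_i(z) such that for all θ₁, θ₂, θ̄ within distance ε of θ₀: ‖h_i(x_{i−1}(θ₀,z), θ₁, z) − h_i(x_{i−1}(θ₀,z), θ₂, z)‖ ≤ N_i(z)‖θ₁ − θ₂‖; ‖h_i(x_{i−1}(θ₁,z), θ̄, z) − h_i(x_{i−1}(θ₂,z), θ̄, z)‖ ≤ K_i(z)‖x_{i−1}(θ₁,z) − x_{i−1}(θ₂,z)‖ (i ≥ 2); and |f(x₁(θ₁,z),…,x_i(θ₁,z), x_{i+1}(θ₂,z),…,x_n(θ₂,z)) − f(x₁(θ₁,z),…,x_{i−1}(θ₁,z),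 x_i(θ₂,z),…,x_n(θ₂,z))| ≤ M_i(z)‖x_i(θ₁,z) − x_i(θ₂,z)‖; (iii) F(θ, ·) is ν-integrable for ‖θ − θ₀‖ ≤ ε; (iv) ∫_Z Σ_{i=1}^n M_i(z) Σ_{j=1}^i ∏_{k=1}^{i−j} K_{i−k+1}(z) · N_j(z) dν(z) < ∞. Then θ ↦ ∫_Z F(θ, z) dν(z) is differentiable at θ₀ and its gradient equals ∫_Z ∇_θ F(θ₀, z) dν(z). -/

import Mathlib

/-!
Differentiation under the integral sign (dominated convergence) only needs an integrable bound
on the difference quotients of `θ ↦ F(θ, z)` near `θ₀`. Such a bound comes from propagating the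
perturbation of `θ` through the recursion: by induction
`‖x_{i+1}(θ) - x_{i+1}(θ₀)‖ ≤ B_i ‖θ - θ₀‖` with `B = propagatedLipschitz K N`, and replacing the
arguments of `f` one at a time telescopes `|F(θ) - F(θ₀)|` into `∑ M_i B_i ‖θ - θ₀‖`. The gradient is measurable because its
directional derivatives are a.e. limits of difference quotients.
-/

open MeasureTheory Filter Finset Topology

section Measurability

variable {Z : Type*} [MeasurableSpace Z] {μ : Measure Z} {𝕜 : Type*} [RCLike 𝕜]
  {H : Type*} [NormedAddCommGroup H] [NormedSpace 𝕜 H]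
  {G : Type*} [NormedAddCommGroup G] [NormedSpace 𝕜 G]

theorem aestronglyMeasurable_clm_of_forall_apply [FiniteDimensional 𝕜 H] {L : Z → H →L[𝕜] G}
    (hL : ∀ v, AEStronglyMeasurable (fun z => L z v) μ) : AEStronglyMeasurable L μ := by
  let b := Module.finBasis 𝕜 H
  let coord : Fin _ → StrongDual 𝕜 H := fun i =>
    (ContinuousLinearMap.proj i).comp b.equivFunL.toContinuousLinearMap
  have hL_eq : L = fun z => ∑ i, ContinuousLinearMap.smulRightL 𝕜 H G (coord i) (L z (b i)) := by
    funext z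
    ext v
    simp only [coord, ContinuousLinearMap.smulRightL_apply_apply, _root_.sum_apply,
      ContinuousLinearMap.smulRight_apply, ContinuousLinearMap.comp_apply,
      ContinuousLinearEquiv.coe_coe, ContinuousLinearMap.proj_apply, Module.Basis.equivFunL_apply]
    conv_lhs => rw [← b.sum_equivFun v]
    simp only [map_sum, map_smul, Module.Basis.equivFun_apply]
  rw [hL_eq]
  exact Finset.aestronglyMeasurable_fun_sum _ fun i _ =>
    (ContinuousLinearMap.continuous _).comp_aestronglyMeasurable (hL (b i))

theorem aestronglyMeasurable_fderiv_apply {F : H → Z → G} {θ₀ : H}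
    (hF : ∀ᶠ θ in 𝓝 θ₀, AEStronglyMeasurable (F θ) μ)
    (hdiff : ∀ᵐ z ∂μ, DifferentiableAt 𝕜 (F · z) θ₀) (v : H) :
    AEStronglyMeasurable (fun z => fderiv 𝕜 (F · z) θ₀ v) μ := by
  classical
  have hc : Tendsto (fun p : ℕ => ‖(p : 𝕜)‖) atTop atTop := by
    simpa only [RCLike.norm_natCast] using tendsto_natCast_atTop_atTop
  have hθ : Tendsto (fun p : ℕ => θ₀ + (p : 𝕜)⁻¹ • v) atTop (𝓝 θ₀) := by
    rw [tendsto_norm_atTop_iff_cobounded] at hc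
    simpa using tendsto_const_nhds.add ((tendsto_inv₀_cobounded.comp hc).smul_const v)
  -- the difference quotients, replaced by `0` at the finitely many `p` where they might fail
  -- to be measurable
  let q : ℕ → Z → G := fun p z =>
    if AEStronglyMeasurable (F (θ₀ + (p : 𝕜)⁻¹ • v)) μ then
      (p : 𝕜) • (F (θ₀ + (p : 𝕜)⁻¹ • v) z - F θ₀ z) else 0
  refine aestronglyMeasurable_of_tendsto_ae atTop (f := q) (fun p => ?_) ?_
  · by_cases hp : AEStronglyMeasurable (F (θ₀ + (p : 𝕜)⁻¹ • v)) μ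
    · simp only [q, if_pos hp]
      exact (hp.sub hF.self_of_nhds).const_smul _
    · simpa only [q, if_neg hp] using aestronglyMeasurable_const
  · filter_upwards [hdiff] with z hz
    refine (hz.hasFDerivAt.lim v hc).congr' ?_
    filter_upwards [hθ.eventually hF] with p hp
    simp only [q, if_pos hp]

end Measurability

/-- The perturbation of `θ` entering the recursion `x_{j+1} = h_j(x_j, θ)` at step `j` (size `N j`)
is amplified by `K (j+1) ⋯ K i` on its way to `x_{i+1}`. -/
def propagatedLipschitz (K N : ℕ → ℝ) (i : ℕ) : ℝ :=
  ∑ j ∈ range (i + 1), (∏ t ∈ Ico (j + 1) (i + 1), K t) * N j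

theorem propagatedLipschitz_zero (K N : ℕ → ℝ) : propagatedLipschitz K N 0 = N 0 := by
  simp [propagatedLipschitz]

theorem propagatedLipschitz_succ (K N : ℕ → ℝ) (i : ℕ) :
    propagatedLipschitz K N (i + 1) = K (i + 1) * propagatedLipschitz K N i + N (i + 1) := by
  rw [propagatedLipschitz, sum_range_succ, Ico_self, prod_empty, one_mul, propagatedLipschitz,
    mul_sum]
  congr 1
  refine sum_congr rfl fun j hj => ?_
  rw [prod_Ico_succ_top (by simpa [Nat.lt_succ_iff] using hj)]
  ring

section StatePerturbation

variable {E : ℕ → Type*} [∀ i, SeminormedAddCommGroup (E i)] {Θ : Type*}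
  [SeminormedAddCommGroup Θ]

theorem norm_sub_le_propagatedLipschitz_mul (x : (i : ℕ) → Θ → E i)
    (g : (i : ℕ) → E i → Θ → E (i + 1)) (hx : ∀ i θ, x (i + 1) θ = g i (x i θ) θ)
    {θ θ₀ : Θ} (hx0 : x 0 θ = x 0 θ₀) {n : ℕ} {K N : ℕ → ℝ} (hK : ∀ j, 0 ≤ K j)
    (hN_lip : ∀ j < n, ‖g j (x j θ₀) θ - g j (x j θ₀) θ₀‖ ≤ N j * ‖θ - θ₀‖)
    (hK_lip : ∀ j, 1 ≤ j → j < n → ‖g j (x j θ) θ - g j (x j θ₀) θ‖ ≤ K j * ‖x j θ - x j θ₀‖) :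
    ∀ i < n, ‖x (i + 1) θ - x (i + 1) θ₀‖ ≤ propagatedLipschitz K N i * ‖θ - θ₀‖ := by
  intro i
  induction i with
  | zero =>
    intro hn
    simpa [hx, hx0, propagatedLipschitz_zero] using hN_lip 0 hn
  | succ i ih =>
    intro hn
    calc ‖x (i + 2) θ - x (i + 2) θ₀‖
        = ‖(g (i + 1) (x (i + 1) θ) θ - g (i + 1) (x (i + 1) θ₀) θ) +
            (g (i + 1) (x (i + 1) θ₀) θ - g (i + 1) (x (i + 1) θ₀) θ₀)‖ := by
          rw [hx (i + 1) θ, hx (i + 1) θ₀, sub_add_sub_cancel]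
      _ ≤ K (i + 1) * ‖x (i + 1) θ - x (i + 1) θ₀‖ + N (i + 1) * ‖θ - θ₀‖ :=
          (norm_add_le _ _).trans (add_le_add (hK_lip _ (by omega) hn) (hN_lip _ hn))
      _ ≤ K (i + 1) * (propagatedLipschitz K N i * ‖θ - θ₀‖) + N (i + 1) * ‖θ - θ₀‖ := by
          gcongr
          · exact hK _
          · exact ih (by omega)
      _ = propagatedLipschitz K N (i + 1) * ‖θ - θ₀‖ := by
          rw [propagatedLipschitz_succ]
          ring

end StatePerturbation

theorem abs_sub_le_sum_of_abs_sub_piecewise_le {n : ℕ} {E : Fin n → Type*}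
    (f : ((j : Fin n) → E j) → ℝ) (u v : (j : Fin n) → E j) (c : ℕ → ℝ)
    (hc : ∀ i < n, |f (fun j => if j.1 < i + 1 then u j else v j) -
      f (fun j => if j.1 < i then u j else v j)| ≤ c i) :
    |f u - f v| ≤ ∑ i ∈ range n, c i := by
  let w : ℕ → ℝ := fun i => f (fun j => if j.1 < i then u j else v j)
  have hw0 : w 0 = f v := by simp [w]
  have hwn : w n = f u := by simp [w]
  calc |f u - f v| = |∑ i ∈ range n, (w (i + 1) - w i)| := by rw [sum_range_sub, hw0, hwn]
    _ ≤ ∑ i ∈ range n, |w (i + 1) - w i| := abs_sum_le_sum_abs _ _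
    _ ≤ ∑ i ∈ range n, c i := sum_le_sum fun i hi => hc i (mem_range.1 hi)

/-- Indices are shifted from the paper's: `h i`, `N i`, `M i` stand for `h_{i+1}`, `N_{i+1}`,
`M_{i+1}`, and `K j` (`1 ≤ j < n`) for `K_{j+1}`. -/
theorem stmt_5
    (n m : ℕ) (k : ℕ → ℕ)
    {Z : Type*} [MeasurableSpace Z] (ν : Measure Z)
    (x₀ : EuclideanSpace ℝ (Fin (k 0)))
    (h : (i : ℕ) → EuclideanSpace ℝ (Fin (k i)) × EuclideanSpace ℝ (Fin m) × Z →
      EuclideanSpace ℝ (Fin (k (i + 1))))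
    (f : ((j : Fin n) → EuclideanSpace ℝ (Fin (k (j.1 + 1)))) → ℝ)
    (θ₀ : EuclideanSpace ℝ (Fin m)) (ε : ℝ) (hε : 0 < ε)
    (x : (i : ℕ) → EuclideanSpace ℝ (Fin m) → Z → EuclideanSpace ℝ (Fin (k i)))
    (hx0 : ∀ θ z, x 0 θ z = x₀)
    (hxs : ∀ i θ z, x (i + 1) θ z = h i (x i θ z, θ, z))
    (F : EuclideanSpace ℝ (Fin m) → Z → ℝ)
    (hF : ∀ θ z, F θ z = f (fun j : Fin n => x (j.1 + 1) θ z))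
    (hdiff : ∀ᵐ z ∂ν, DifferentiableAt ℝ (fun θ => F θ z) θ₀)
    (N K M : ℕ → Z → ℝ)
    (hlip : ∀ᵐ z ∂ν,
      (∀ j, 0 ≤ N j z) ∧ (∀ j, 0 ≤ K j z) ∧ (∀ j, 0 ≤ M j z) ∧
      (∀ j < n, ∀ θ₁ θ₂ : EuclideanSpace ℝ (Fin m),
        ‖θ₁ - θ₀‖ ≤ ε → ‖θ₂ - θ₀‖ ≤ ε →
        ‖h j (x j θ₀ z, θ₁, z) - h j (x j θ₀ z, θ₂, z)‖ ≤ N j z * ‖θ₁ - θ₂‖) ∧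
      (∀ j, 1 ≤ j → j < n → ∀ θ₁ θ₂ θb : EuclideanSpace ℝ (Fin m),
        ‖θ₁ - θ₀‖ ≤ ε → ‖θ₂ - θ₀‖ ≤ ε → ‖θb - θ₀‖ ≤ ε →
        ‖h j (x j θ₁ z, θb, z) - h j (x j θ₂ z, θb, z)‖ ≤ K j z * ‖x j θ₁ z - x j θ₂ z‖) ∧
      (∀ i < n, ∀ θ₁ θ₂ : EuclideanSpace ℝ (Fin m),
        ‖θ₁ - θ₀‖ ≤ ε → ‖θ₂ - θ₀‖ ≤ ε →
        |f (fun j : Fin n => if j.1 < i + 1 then x (j.1 + 1) θ₁ z else x (j.1 + 1) θ₂ z) -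
            f (fun j : Fin n => if j.1 < i then x (j.1 + 1) θ₁ z else x (j.1 + 1) θ₂ z)| ≤
          M i z * ‖x (i + 1) θ₁ z - x (i + 1) θ₂ z‖))
    (hFint : ∀ θ : EuclideanSpace ℝ (Fin m), ‖θ - θ₀‖ ≤ ε → Integrable (F θ) ν)
    (hBint : Integrable (fun z => ∑ i ∈ Finset.range n, M i z *
      ∑ j ∈ Finset.range (i + 1), (∏ t ∈ Finset.Ico (j + 1) (i + 1), K t z) * N j z) ν) :
    HasFDerivAt (fun θ => ∫ z, F θ z ∂ν)
      (∫ z, fderiv ℝ (fun θ => F θ z) θ₀ ∂ν) θ₀ := by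
  have hball : ∀ θ ∈ Metric.ball θ₀ ε, ‖θ - θ₀‖ ≤ ε := fun θ hθ => (mem_ball_iff_norm.1 hθ).le
  have hθ₀ : ‖θ₀ - θ₀‖ ≤ ε := by simpa using hε.le
  have hF_meas : ∀ θ ∈ Metric.ball θ₀ ε, AEStronglyMeasurable (F θ) ν :=
    fun θ hθ => (hFint θ (hball θ hθ)).1
  have hF_lip : ∀ᵐ z ∂ν, ∀ θ ∈ Metric.ball θ₀ ε, ‖F θ z - F θ₀ z‖ ≤
      (∑ i ∈ range n, M i z * propagatedLipschitz (K · z) (N · z) i) * ‖θ - θ₀‖ := by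
    filter_upwards [hlip] with z hz θ hθ
    obtain ⟨-, hK, hM, hN_lip, hK_lip, hM_lip⟩ := hz
    have hstate := norm_sub_le_propagatedLipschitz_mul (fun i θ => x i θ z)
      (fun i e θ => h i (e, θ, z)) (fun i θ => hxs i θ z) (by simp only [hx0]) hK
      (fun j hj => hN_lip j hj θ θ₀ (hball θ hθ) hθ₀)
      (fun j hj₁ hj => hK_lip j hj₁ hj θ θ₀ θ (hball θ hθ) hθ₀ (hball θ hθ))
    rw [hF, hF, Real.norm_eq_abs, sum_mul]
    refine abs_sub_le_sum_of_abs_sub_piecewise_le _ _ _ _ fun i hi => ?_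
    calc _ ≤ M i z * ‖x (i + 1) θ z - x (i + 1) θ₀ z‖ := hM_lip i hi θ θ₀ (hball θ hθ) hθ₀
      _ ≤ _ := by
        rw [mul_assoc]
        exact mul_le_mul_of_nonneg_left (hstate i hi) (hM i)
  have hF'_meas := aestronglyMeasurable_clm_of_forall_apply
    (aestronglyMeasurable_fderiv_apply (eventually_of_mem (Metric.ball_mem_nhds θ₀ hε) hF_meas)
      hdiff)
  exact (hasFDerivAt_integral_of_dominated_loc_of_lip' (Metric.ball_mem_nhds θ₀ hε) hF_meas
    (hFint θ₀ hθ₀) hF'_meas hF_lip hBint (hdiff.mono fun z hz => hz.hasFDerivAt)).2
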